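/- arXiv:2404.18014 — 6 statements merged into one kernel-verified Lean document; each statement's English description precedes it below -/
import Mathlib

section
/- Let G be a finite simple graph admitting a cubical edge-labelling χ : E(G) → ℕ. Then there exist n and an embedding f of G into the hypercube Q_n (an isomorphism from G onto a subgraph of Q_n) such that for every edge xy of G, χ(xy) equals the direction of the edge f(x)f(y), i.e., the unique coordinate in which f(x) and f(y) differ. -/
open SimpleGraph

/-- The number of ones (`true` coordinates) of a vertex of the hypercube. -/
def onesCount {n : ℕ} (x : Fin n → Bool) : ℕ := (Finset.univ.filter fun i => x i = true).card

/-- The `n`-dimensional hypercube graph `Q_n`. -/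
def cube (n : ℕ) : SimpleGraph (Fin n → Bool) where
  Adj x y := hammingDist x y = 1
  symm := by constructor; intro x y h; rwa [hammingDist_comm]
  loopless := by constructor; intro x h; simp [hammingDist_self] at h

/-- The vertex set of the `k`-th layer of `Q_n`. -/
def layerSet (n k : ℕ) : Set (Fin n → Bool) := {x | onesCount x = k ∨ onesCount x = k + 1}

/-- The `k`-th layer of `Q_n`: the subgraph induced on vertices with `k` or `k+1` ones. -/
def layer (n k : ℕ) : SimpleGraph (layerSet n k) := (cube n).induce (layerSet n k)

/-- `f` is an isomorphism from `G` onto a subgraph of `H`. -/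
def IsEmbedding {V W : Type*} (G : SimpleGraph V) (H : SimpleGraph W) (f : V → W) : Prop :=
  Function.Injective f ∧ ∀ u v, G.Adj u v → H.Adj (f u) (f v)

/-- `f` is an isomorphism from `G` onto an induced subgraph of `H`. -/
def IsInducedEmbedding {V W : Type*} (G : SimpleGraph V) (H : SimpleGraph W) (f : V → W) : Prop :=
  Function.Injective f ∧ ∀ u v, G.Adj u v ↔ H.Adj (f u) (f v)

/-- `G` is cubical: isomorphic to a subgraph of some hypercube. -/
def IsCubical {V : Type*} (G : SimpleGraph V) : Prop :=
  ∃ (n : ℕ) (f : V → (Fin n → Bool)), IsEmbedding G (cube n) f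

/-- `G` is layered: isomorphic to a subgraph of some layer of some hypercube. -/
def IsLayered {V : Type*} (G : SimpleGraph V) : Prop :=
  ∃ (n k : ℕ) (f : V → layerSet n k), IsEmbedding G (layer n k) f

/-- A cubical edge-labelling. -/
def IsCubicalLabelling {V : Type*} (G : SimpleGraph V) (χ : Sym2 V → ℕ) : Prop :=
  (∀ (u : V) (w : G.Walk u u), w.IsCycle → ∀ c : ℕ, Even ((w.edges.map χ).count c)) ∧
  (∀ (u v : V) (w : G.Walk u v), w.IsPath → 0 < w.length →
      ∃ c : ℕ, Odd ((w.edges.map χ).count c))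

/-- A layered edge-labelling. -/
def IsLayeredLabelling {V : Type*} (G : SimpleGraph V) (χ : Sym2 V → ℕ) : Prop :=
  IsCubicalLabelling G χ ∧
  ∀ e₁ ∈ G.edgeSet, ∀ e₂ ∈ G.edgeSet, χ e₁ = χ e₂ →
    ∀ u v, u ∈ e₁ → v ∈ e₂ →
      ∀ (w : G.Walk u v), w.IsPath → (∀ e ∈ w.edges, χ e ≠ χ e₁) → Even w.length

/-- `(G, P)` is `t`-distance-separating. -/
def DistSeparating {V : Type*} (G : SimpleGraph V) (P : Set (Sym2 V)) (t : ℕ) : Prop :=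
  (∃ (n : ℕ) (f : V → (Fin n → Bool)), IsEmbedding G (cube n) f ∧
      ∀ x y : V, s(x, y) ∈ P → hammingDist (f x) (f y) = t) ∧
  (∀ (n k : ℕ) (g : V → layerSet n k), IsEmbedding G (layer n k) g →
      ∃ x y : V, s(x, y) ∈ P ∧ hammingDist (g x).1 (g y).1 = t + 2)

/-! Fix a root in each component and record, for every label `c`, the parity of the number of
`c`-edges on a walk from the root to each vertex. The cycle condition makes this independent of the walk:
bypassing a repeated vertex cuts off a closed walk that is either a cycle or runs back and forth
along a single edge, so every closed walk has even label counts. Then adjacent vertices differ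
exactly in the coordinate of their edge label, and the path condition separates distinct vertices
of one component; a few extra coordinates recording the component separate the rest. -/

namespace SimpleGraph.Walk

variable {V α : Type*} {G : SimpleGraph V} [DecidableEq α] (χ : Sym2 V → α)

def labelParity {u v : V} (w : G.Walk u v) (c : α) : ZMod 2 := (w.edges.map χ).count c

@[simp]
lemma labelParity_nil {u : V} (c : α) : labelParity χ (nil : G.Walk u u) c = 0 := by
  simp [labelParity]

@[simp]
lemma labelParity_cons {u v w : V} (h : G.Adj u v) (p : G.Walk v w) (c : α) :
    labelParity χ (cons h p) c = (if χ s(u, v) = c then 1 else 0) + labelParity χ p c := by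
  simp only [labelParity, edges_cons, List.map_cons, List.count_cons, beq_iff_eq]
  split_ifs <;> push_cast <;> ring

@[simp]
lemma labelParity_append {u v w : V} (p : G.Walk u v) (q : G.Walk v w) (c : α) :
    labelParity χ (p.append q) c = labelParity χ p c + labelParity χ q c := by
  simp [labelParity]

@[simp]
lemma labelParity_reverse {u v : V} (p : G.Walk u v) (c : α) :
    labelParity χ p.reverse c = labelParity χ p c := by
  simp [labelParity]

@[simp]
lemma labelParity_copy {u v u' v' : V} (p : G.Walk u v) (hu : u = u') (hv : v = v') (c : α) :
    labelParity χ (p.copy hu hv) c = labelParity χ p c := by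
  subst hu hv
  rfl

lemma exists_mem_edges_of_labelParity_ne_zero {u v : V} {w : G.Walk u v} {c : α}
    (h : labelParity χ w c ≠ 0) : ∃ e ∈ w.edges, χ e = c := by
  by_contra! hc
  refine h ?_
  rw [labelParity, List.count_eq_zero_of_not_mem (by simpa using hc), Nat.cast_zero]

variable {χ}

lemma labelParity_cons_eq_zero_of_isPath
    (hcyc : ∀ (u : V) (w : G.Walk u u), w.IsCycle → ∀ c, labelParity χ w c = 0)
    {u v : V} (h : G.Adj u v) {p : G.Walk v u} (hp : p.IsPath) (c : α) :
    labelParity χ (cons h p) c = 0 := by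
  by_cases he : s(u, v) ∈ p.edges
  · rw [hp.eq_adj_toWalk_of_mem_edges (Sym2.eq_swap ▸ he)]
    simp [Adj.toWalk, Sym2.eq_swap, CharTwo.add_self_eq_zero]
  · exact hcyc u _ ((cons_isCycle_iff p h).2 ⟨hp, he⟩) c

lemma labelParity_bypass [DecidableEq V]
    (hcyc : ∀ (u : V) (w : G.Walk u u), w.IsCycle → ∀ c, labelParity χ w c = 0)
    {u v : V} (w : G.Walk u v) (c : α) : labelParity χ w.bypass c = labelParity χ w c := by
  induction w with
  | nil => rfl
  | cons h p ih =>
    rw [bypass]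
    split_ifs with hs
    · have hsplit := congrArg (labelParity χ · c) (p.bypass.take_spec hs)
      simp only [labelParity_append] at hsplit
      rw [labelParity_cons, ← ih, ← hsplit, ← add_assoc, ← labelParity_cons χ h,
        labelParity_cons_eq_zero_of_isPath hcyc h ((bypass_isPath p).takeUntil hs), zero_add]
    · simp [ih]

lemma labelParity_eq_zero_of_closed [DecidableEq V]
    (hcyc : ∀ (u : V) (w : G.Walk u u), w.IsCycle → ∀ c, labelParity χ w c = 0)
    {u : V} (w : G.Walk u u) (c : α) : labelParity χ w c = 0 := by
  rw [← labelParity_bypass hcyc, (isPath_iff_nil.1 (bypass_isPath w)).eq_nil, labelParity_nil]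

theorem exists_labelParity_eq_add
    (hcyc : ∀ (u : V) (w : G.Walk u u), w.IsCycle → ∀ c, labelParity χ w c = 0) :
    ∃ φ : V → α → ZMod 2, ∀ (u v : V) (w : G.Walk u v) (c : α),
      labelParity χ w c = φ u c + φ v c := by
  classical
  have root (v : V) : G.Walk (G.connectedComponentMk v).out v :=
    (ConnectedComponent.exact (G.connectedComponentMk v).out_eq).some
  refine ⟨fun v c => labelParity χ (root v) c, fun u v w c => ?_⟩
  have hroot : (G.connectedComponentMk u).out = (G.connectedComponentMk v).out := by
    rw [ConnectedComponent.sound w.reachable]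
  have hclosed := labelParity_eq_zero_of_closed hcyc
    (((root u).append w).append ((root v).reverse.copy rfl hroot.symm)) c
  simp only [labelParity_append, labelParity_copy, labelParity_reverse] at hclosed
  rw [← sub_eq_zero, CharTwo.sub_eq_add]
  linear_combination hclosed

end SimpleGraph.Walk

lemma ZMod.decide_eq_one_ne_iff (a b : ZMod 2) :
    decide (a = 1) ≠ decide (b = 1) ↔ a + b = 1 := by
  revert a b
  decide

lemma hammingDist_append {β : Type*} [DecidableEq β] {m n : ℕ} (x x' : Fin m → β)
    (y y' : Fin n → β) :
    hammingDist (Fin.append x y) (Fin.append x' y') = hammingDist x x' + hammingDist y y' := by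
  simp only [hammingDist, Finset.card_filter, Fin.sum_univ_add, Fin.append_left, Fin.append_right]

lemma cube_adj_of_forall_ne_iff {n : ℕ} {x y : Fin n → Bool} (j : Fin n)
    (h : ∀ i, x i ≠ y i ↔ i = j) : (cube n).Adj x y := by
  show hammingDist x y = 1
  rw [hammingDist, Finset.card_eq_one]
  exact ⟨j, by ext i; simp [h]⟩

lemma isEmbedding_cube_append {V : Type*} {G : SimpleGraph V} {m n : ℕ} {f : V → Fin m → Bool}
    {g : V → Fin n → Bool} (hf : ∀ u v, G.Adj u v → (cube m).Adj (f u) (f v))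
    (hg : ∀ u v, G.Adj u v → g u = g v) (hinj : ∀ u v, f u = f v → g u = g v → u = v) :
    IsEmbedding G (cube (m + n)) fun v => Fin.append (f v) (g v) := by
  refine ⟨fun u v huv => hinj u v ?_ ?_, fun u v h => ?_⟩
  · funext i
    simpa using congrFun huv (Fin.castAdd n i)
  · funext i
    simpa using congrFun huv (Fin.natAdd m i)
  · show hammingDist _ _ = 1
    rw [hammingDist_append, hg u v h, hammingDist_self, add_zero]
    exact hf u v h

lemma SimpleGraph.exists_encoding_eq_iff_reachable {V : Type*} [Finite V] (G : SimpleGraph V) :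
    ∃ (m : ℕ) (g : V → Fin m → Bool), ∀ u v, g u = g v ↔ G.Reachable u v := by
  classical
  have := Fintype.ofFinite G.ConnectedComponent
  let e := Fintype.equivFin G.ConnectedComponent
  refine ⟨_, fun v j => e (G.connectedComponentMk v) = j, fun u v => ?_⟩
  rw [← ConnectedComponent.eq, ← e.apply_eq_iff_eq]
  constructor
  · intro h
    simpa using congrFun h (e (G.connectedComponentMk v))
  · intro h
    simp [h]

theorem IsCubicalLabelling.exists_parity_map {V : Type*} [Finite V] {G : SimpleGraph V}
    {χ : Sym2 V → ℕ} (hχ : IsCubicalLabelling G χ) :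
    ∃ (N : ℕ) (p : V → Fin N → Bool),
      (∀ u v, G.Adj u v → ∃ j : Fin N, (j : ℕ) = χ s(u, v) ∧ ∀ i, p u i ≠ p v i ↔ i = j) ∧
      ∀ u v, G.Reachable u v → p u = p v → u = v := by
  classical
  have := Fintype.ofFinite V
  obtain ⟨hcyc, hpath⟩ := hχ
  obtain ⟨φ, hφ⟩ := Walk.exists_labelParity_eq_add fun u w hw c =>
    ZMod.natCast_eq_zero_iff_even.2 (hcyc u w hw c)
  have hχN (e : Sym2 V) : χ e < Finset.univ.sup χ + 1 :=
    Nat.lt_succ_of_le (Finset.le_sup (Finset.mem_univ e))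
  refine ⟨_, fun v i => φ v i = 1, fun u v h => ⟨⟨_, hχN s(u, v)⟩, rfl, fun i => ?_⟩, ?_⟩
  · have hedge := hφ u v h.toWalk i
    simp only [Adj.toWalk, Walk.labelParity_cons, Walk.labelParity_nil, add_zero] at hedge
    rw [ZMod.decide_eq_one_ne_iff, ← hedge, Fin.ext_iff]
    split_ifs <;> simp_all [eq_comm]
  · rintro u v ⟨w⟩ hp
    by_contra hne
    obtain ⟨c, hodd⟩ := hpath u v w.bypass w.bypass_isPath
      (Nat.pos_of_ne_zero fun h => hne (Walk.eq_of_length_eq_zero h))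
    have hc : Walk.labelParity χ w.bypass c = 1 := ZMod.natCast_eq_one_iff_odd.2 hodd
    obtain ⟨e, -, rfl⟩ := Walk.exists_mem_edges_of_labelParity_ne_zero χ (hc ▸ one_ne_zero)
    refine (ZMod.decide_eq_one_ne_iff _ _).2 ?_ (congrFun hp ⟨_, hχN e⟩)
    rw [← hφ u v w.bypass, hc]

/-- A graph admitting a cubical edge-labelling embeds into some
hypercube with the labels as edge directions. -/
theorem embedding_of_cubical_labelling {V : Type} [Fintype V]
    (G : SimpleGraph V) (χ : Sym2 V → ℕ) (hχ : IsCubicalLabelling G χ) :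
    ∃ (n : ℕ) (f : V → (Fin n → Bool)), IsEmbedding G (cube n) f ∧
      ∀ x y : V, G.Adj x y → ∃ i : Fin n, (i : ℕ) = χ s(x, y) ∧ f x i ≠ f y i := by
  obtain ⟨N, p, hp_adj, hp_inj⟩ := hχ.exists_parity_map
  obtain ⟨m, g, hg⟩ := G.exists_encoding_eq_iff_reachable
  refine ⟨N + m, fun v => Fin.append (p v) (g v), isEmbedding_cube_append (fun u v h => ?_)
    (fun u v h => (hg u v).2 h.reachable) (fun u v hpuv hguv => hp_inj u v ((hg u v).1 hguv) hpuv),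
    fun x y h => ?_⟩
  · obtain ⟨j, -, hj⟩ := hp_adj u v h
    exact cube_adj_of_forall_ne_iff j hj
  · obtain ⟨j, hj, hne⟩ := hp_adj x y h
    exact ⟨Fin.castAdd m j, hj, by simpa using (hne j).2 rfl⟩
end

section
/- Let T be a finite tree, let P be a set of unordered pairs of vertices of T, and let t be a positive integer such that (T, P) is t-distance-separating. Then there exist a finite tree T' and a set P' of unordered pairs of vertices of T' such that (T', P') is (t+2)-distance-separating. -/
/-!
Attach `t + 4` pendant leaves to every vertex of `T` and let `P'` consist of the pairs of leaves
hanging at the two ends of a pair of `P`. Giving each leaf a fresh coordinate of its own turns a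
cube embedding of `T` into one of `T'` in which these leaf pairs are at distance `t + 2`.
Conversely, a layer embedding of `T'` restricts to one of `T`, in which some `{x, y} ∈ P` is at
distance `t + 2`. The `t + 4` leaves at `x` flip distinct coordinates, so one of them flips a
coordinate `a` on which `x` and `y` agree; likewise some leaf at `y` flips such a coordinate
`b ≠ a`, and these two leaves are at distance `t + 4`.
-/

open SimpleGraph

open Function

section Hamming

variable {ι κ β : Type*} [Fintype ι] [Fintype κ] [DecidableEq β]

lemma hammingDist_comp_equiv (e : κ ≃ ι) (x y : ι → β) :
    hammingDist (x ∘ e) (y ∘ e) = hammingDist x y :=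
  Finset.card_equiv e (by simp)

lemma hammingDist_sumElim (x₁ y₁ : ι → β) (x₂ y₂ : κ → β) :
    hammingDist (Sum.elim x₁ x₂) (Sum.elim y₁ y₂) = hammingDist x₁ y₁ + hammingDist x₂ y₂ := by
  unfold hammingDist
  rw [← Finset.card_disjSum]
  congr 1
  ext (i | i) <;> simp

variable [DecidableEq ι]

lemma hammingDist_false_decide_eq (a : ι) :
    hammingDist (fun _ => false) (fun i => decide (i = a)) = 1 := by
  simp [hammingDist, Finset.filter_eq']

lemma hammingDist_decide_eq_decide_eq {a b : ι} (hab : a ≠ b) :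
    hammingDist (fun i => decide (i = a)) (fun i => decide (i = b)) = 2 := by
  have : Finset.univ.filter (fun i => decide (i = a) ≠ decide (i = b)) = {a, b} := by
    ext i; by_cases ha : i = a <;> by_cases hb : i = b <;> simp_all
  rw [hammingDist, this, Finset.card_pair hab]

lemma exists_eq_update_not_of_hammingDist_eq_one {x y : ι → Bool} (h : hammingDist x y = 1) :
    ∃ a, y = update x a (!x a) := by
  obtain ⟨a, ha⟩ := Finset.card_eq_one.mp h
  have hne : ∀ i, x i ≠ y i ↔ i = a := fun i => by simpa using Finset.ext_iff.mp ha i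
  refine ⟨a, funext fun i => ?_⟩
  rcases eq_or_ne i a with rfl | hi
  · rw [update_self]
    exact Bool.eq_not_of_ne ((hne i).2 rfl).symm
  · rw [update_of_ne hi]
    exact (not_not.mp (mt (hne i).1 hi)).symm

lemma hammingDist_update_not_update_not {x y : ι → Bool} {a b : ι} (hab : a ≠ b)
    (ha : x a = y a) (hb : x b = y b) :
    hammingDist (update x a (!x a)) (update y b (!y b)) = hammingDist x y + 2 := by
  have : Finset.univ.filter (fun i => update x a (!x a) i ≠ update y b (!y b) i)
      = insert a (insert b (Finset.univ.filter fun i => x i ≠ y i)) := by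
    ext i
    rcases eq_or_ne i a with rfl | hia
    · simp [update_of_ne hab, ha]
    rcases eq_or_ne i b with rfl | hib
    · simp [hb, hia]
    · simp [hia, hib]
  rw [hammingDist, this, Finset.card_insert_of_notMem (by simp [hab, ha]),
    Finset.card_insert_of_notMem (by simp [hb])]
  rfl

lemma exists_hammingDist_eq_add_two {x y : ι → Bool} {X Y : κ → ι → Bool}
    (hX : Injective X) (hY : Injective Y)
    (hxX : ∀ i, hammingDist x (X i) = 1) (hyY : ∀ j, hammingDist y (Y j) = 1)
    (hcard : hammingDist x y + 2 ≤ Fintype.card κ) :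
    ∃ i j, hammingDist (X i) (Y j) = hammingDist x y + 2 := by
  choose c hc using fun i => exists_eq_update_not_of_hammingDist_eq_one (hxX i)
  choose d hd using fun j => exists_eq_update_not_of_hammingDist_eq_one (hyY j)
  have hc_inj : Injective c := fun i i' h => hX (by rw [hc i, hc i', h])
  have hd_inj : Injective d := fun j j' h => hY (by rw [hd j, hd j', h])
  set D := Finset.univ.filter fun a => x a ≠ y a
  have hD : D.card = hammingDist x y := rfl
  obtain ⟨a, ha⟩ : (Finset.univ.image c \ D).Nonempty := by
    rw [← Finset.card_pos]
    have := Finset.le_card_sdiff D (Finset.univ.image c)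
    rw [Finset.card_image_of_injective _ hc_inj, Finset.card_univ] at this
    omega
  obtain ⟨b, hb⟩ : (Finset.univ.image d \ insert a D).Nonempty := by
    rw [← Finset.card_pos]
    have := Finset.le_card_sdiff (insert a D) (Finset.univ.image d)
    rw [Finset.card_image_of_injective _ hd_inj, Finset.card_univ] at this
    have := Finset.card_insert_le a D
    omega
  simp only [Finset.mem_sdiff, Finset.mem_image, Finset.mem_univ, true_and, Finset.mem_insert,
    Finset.mem_filter, not_or, not_not, D] at ha hb
  obtain ⟨⟨i, rfl⟩, hxy_a⟩ := ha
  obtain ⟨⟨j, rfl⟩, hba, hxy_b⟩ := hb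
  exact ⟨i, j, by rw [hc i, hd j, hammingDist_update_not_update_not (Ne.symm hba) hxy_a hxy_b]⟩

end Hamming

section Acyclic

variable {V W : Type*} {G : SimpleGraph V} {H : SimpleGraph W}

lemma SimpleGraph.Walk.IsCycle.nontrivial_neighborSet {u v : V} {c : G.Walk u u}
    (hc : c.IsCycle) (hv : v ∈ c.support) : (G.neighborSet v).Nontrivial := by
  classical
  have hc' := hc.rotate hv
  exact ⟨_, (c.rotate v hv).adj_snd hc'.not_nil, _,
    ((c.rotate v hv).adj_penultimate hc'.not_nil).symm, hc'.snd_ne_penultimate⟩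

lemma SimpleGraph.IsAcyclic.of_embedding_of_subsingleton_neighborSet (f : H ↪g G)
    (hH : H.IsAcyclic) (hleaf : ∀ v ∉ Set.range f, (G.neighborSet v).Subsingleton) :
    G.IsAcyclic := by
  intro v c hc
  by_cases hs : ∀ x ∈ c.support, x ∈ Set.range f
  · have hrange : (G.induce (Set.range f)).IsAcyclic :=
      (Embedding.isoInduceRange f).isAcyclic_iff.mp hH
    refine hrange (c.induce _ hs) ?_
    rwa [← Walk.isCycle_map_iff_of_injective (f := (Embedding.induce (Set.range f)).toHom)
      (Embedding.induce (G := G) _).injective, Walk.map_induce]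
  · push Not at hs
    obtain ⟨x, hx, hxf⟩ := hs
    exact (hc.nontrivial_neighborSet hx).not_subsingleton (hleaf x hxf)

end Acyclic

section Pendants

variable {V : Type*} (T : SimpleGraph V) (ι : Type*)

/-- `T` with, at every vertex `v`, pendant leaves `(v, i)` indexed by `i : ι`. -/
def addPendants : SimpleGraph (V ⊕ V × ι) where
  Adj
    | .inl u, .inl v => T.Adj u v
    | .inl u, .inr w => w.1 = u
    | .inr w, .inl u => w.1 = u
    | .inr _, .inr _ => False
  symm := by
    constructor
    rintro (u | w) (v | w') h
    · exact h.symm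
    · exact h
    · exact h
    · exact h.elim
  loopless := by
    constructor
    rintro (u | w) h
    · exact T.loopless.irrefl u h
    · exact h.elim

variable {T ι}

@[simp] lemma addPendants_adj_inl_inl {u v : V} :
    (addPendants T ι).Adj (.inl u) (.inl v) ↔ T.Adj u v := Iff.rfl

@[simp] lemma addPendants_adj_inl_inr {u : V} {w : V × ι} :
    (addPendants T ι).Adj (.inl u) (.inr w) ↔ w.1 = u := Iff.rfl

@[simp] lemma addPendants_adj_inr_inl {u : V} {w : V × ι} :
    (addPendants T ι).Adj (.inr w) (.inl u) ↔ w.1 = u := Iff.rfl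

@[simp] lemma addPendants_adj_inr_inr {w w' : V × ι} :
    ¬ (addPendants T ι).Adj (.inr w) (.inr w') := id

lemma neighborSet_addPendants_inr (w : V × ι) :
    (addPendants T ι).neighborSet (.inr w) = {.inl w.1} := by
  ext (u | w') <;> simp [eq_comm]

variable (T ι)

def embeddingAddPendants : T ↪g addPendants T ι := ⟨Embedding.inl, Iff.rfl⟩

variable {T ι}

lemma isAcyclic_addPendants (hT : T.IsAcyclic) : (addPendants T ι).IsAcyclic := by
  refine hT.of_embedding_of_subsingleton_neighborSet (embeddingAddPendants T ι) ?_
  rintro (u | w) hu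
  · exact absurd ⟨u, rfl⟩ hu
  · rw [neighborSet_addPendants_inr]
    exact Set.subsingleton_singleton

lemma connected_addPendants (hT : T.Connected) : (addPendants T ι).Connected := by
  have hroot : ∀ a, ∃ u, (addPendants T ι).Reachable (.inl u) a := by
    rintro (u | w)
    · exact ⟨u, .rfl⟩
    · exact ⟨w.1, Adj.reachable (by simp)⟩
  have : Nonempty V := hT.nonempty
  refine .mk fun a b => ?_
  obtain ⟨u, hu⟩ := hroot a
  obtain ⟨v, hv⟩ := hroot b
  exact hu.symm.trans (((hT u v).map (embeddingAddPendants T ι).toHom).trans hv)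

lemma SimpleGraph.IsTree.addPendants (hT : T.IsTree) : (addPendants T ι).IsTree :=
  ⟨connected_addPendants hT.connected, isAcyclic_addPendants hT.isAcyclic⟩

end Pendants

lemma IsEmbedding.comp {U V W : Type*} {G : SimpleGraph U} {H : SimpleGraph V}
    {K : SimpleGraph W} {f : V → W} (hf : IsEmbedding H K f) (φ : G ↪g H) :
    IsEmbedding G K (f ∘ φ) :=
  ⟨hf.1.comp φ.injective, fun _ _ h => hf.2 _ _ (φ.map_adj_iff.mpr h)⟩

lemma IsEmbedding.layer_val {V : Type*} {G : SimpleGraph V} {n k : ℕ} {g : V → layerSet n k}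
    (hg : IsEmbedding G (layer n k) g) : IsEmbedding G (cube n) (Subtype.val ∘ g) :=
  ⟨Subtype.val_injective.comp hg.1, hg.2⟩

lemma exists_isEmbedding_cube {W κ : Type*} [Fintype κ] {G : SimpleGraph W} {F : W → κ → Bool}
    (hF : Injective F) (hadj : ∀ u v, G.Adj u v → hammingDist (F u) (F v) = 1) :
    ∃ (n : ℕ) (f : W → Fin n → Bool), IsEmbedding G (cube n) f ∧
      ∀ u v, hammingDist (f u) (f v) = hammingDist (F u) (F v) := by
  let e := Fintype.equivFin κ
  have hdist : ∀ u v, hammingDist (F u ∘ e.symm) (F v ∘ e.symm) = hammingDist (F u) (F v) :=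
    fun u v => hammingDist_comp_equiv e.symm (F u) (F v)
  refine ⟨_, fun u => F u ∘ e.symm, ⟨fun u v h => hF ?_, fun u v h => ?_⟩, hdist⟩
  · rw [← hammingDist_eq_zero, ← hdist]
    exact hammingDist_eq_zero.mpr h
  · exact (hdist u v).trans (hadj u v h)

section PendantCode

variable {V ι κ : Type*} [DecidableEq V] [DecidableEq ι] {T : SimpleGraph V}

/-- Extends `f : V → κ → Bool` to `addPendants T ι` by giving every leaf its own new
coordinate. -/
def pendantCode (f : V → κ → Bool) : V ⊕ V × ι → κ ⊕ V × ι → Bool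
  | .inl v => Sum.elim (f v) fun _ => false
  | .inr w => Sum.elim (f w.1) fun w' => decide (w' = w)

variable {f : V → κ → Bool}

lemma pendantCode_injective (hf : Injective f) : Injective (pendantCode (ι := ι) f) := by
  rintro (u | w) (v | w') h <;> have h₁ := congrFun h <;> simp only [pendantCode] at h₁
  · exact congrArg _ (hf (funext fun i => h₁ (.inl i)))
  · simpa using h₁ (.inr w')
  · simpa using h₁ (.inr w)
  · simpa using h₁ (.inr w)

variable [Fintype κ] [Fintype V] [Fintype ι]

lemma hammingDist_pendantCode_of_adj (hf : ∀ u v, T.Adj u v → hammingDist (f u) (f v) = 1)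
    {a b : V ⊕ V × ι} (hab : (addPendants T ι).Adj a b) :
    hammingDist (pendantCode f a) (pendantCode f b) = 1 := by
  rcases a with u | w <;> rcases b with v | w' <;> simp only [pendantCode, hammingDist_sumElim]
  · simp [hf u v hab]
  · rw [show w'.1 = u from hab, hammingDist_self, hammingDist_false_decide_eq]
  · rw [show w.1 = v from hab, hammingDist_self, hammingDist_comm, hammingDist_false_decide_eq]
  · exact absurd hab addPendants_adj_inr_inr

lemma hammingDist_pendantCode_inr_inr {x y : V} (hxy : x ≠ y) (i j : ι) :
    hammingDist (pendantCode f (.inr (x, i))) (pendantCode f (.inr (y, j)))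
      = hammingDist (f x) (f y) + 2 := by
  simp only [pendantCode, hammingDist_sumElim]
  rw [hammingDist_decide_eq_decide_eq (by simp [hxy])]

end PendantCode

lemma exists_hammingDist_pendants_eq_add_two {V ι : Type*} [Fintype ι] {T : SimpleGraph V}
    {n : ℕ} {g : V ⊕ V × ι → Fin n → Bool} (hg : IsEmbedding (addPendants T ι) (cube n) g)
    {x y : V} (hcard : hammingDist (g (.inl x)) (g (.inl y)) + 2 ≤ Fintype.card ι) :
    ∃ i j, hammingDist (g (.inr (x, i))) (g (.inr (y, j)))
      = hammingDist (g (.inl x)) (g (.inl y)) + 2 :=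
  exists_hammingDist_eq_add_two (hg.1.comp (Sum.inr_injective.comp (Prod.mk_right_injective x)))
    (hg.1.comp (Sum.inr_injective.comp (Prod.mk_right_injective y)))
    (fun _ => hg.2 _ _ rfl) (fun _ => hg.2 _ _ rfl) hcard

def pendantPairs {V : Type*} (P : Set (Sym2 V)) (ι : Type*) : Set (Sym2 (V ⊕ V × ι)) :=
  {e | ∃ x y i j, s(x, y) ∈ P ∧ e = s(.inr (x, i), .inr (y, j))}

/-- From a `t`-distance-separating pair `(T, P)` with `T` a tree one
can construct a `(t+2)`-distance-separating pair `(T', P')` with `T'` a tree. -/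
theorem distSeparating_recursion {V : Type} [Fintype V]
    (T : SimpleGraph V) (hT : T.IsTree) (P : Set (Sym2 V)) (t : ℕ) (ht : 0 < t)
    (h : DistSeparating T P t) :
    ∃ (V' : Type) (_ : Fintype V') (T' : SimpleGraph V'), T'.IsTree ∧
      ∃ P' : Set (Sym2 V'), DistSeparating T' P' (t + 2) := by
  classical
  obtain ⟨⟨n, f, hf, hfP⟩, hlayer⟩ := h
  have hP_ne : ∀ x y, s(x, y) ∈ P → x ≠ y := by
    rintro x _ hxy rfl
    have := hfP x x hxy
    rw [hammingDist_self] at this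
    omega
  obtain ⟨N, g, hg, hgdist⟩ := exists_isEmbedding_cube (G := addPendants T (Fin (t + 4)))
    (pendantCode_injective hf.1) fun _ _ => hammingDist_pendantCode_of_adj hf.2
  refine ⟨_, inferInstance, _, hT.addPendants, pendantPairs P (Fin (t + 4)),
    ⟨N, g, hg, ?_⟩, fun n k g' hg' => ?_⟩
  · rintro a b ⟨x, y, i, j, hxy, hab⟩
    have key := (hgdist _ _).trans (hammingDist_pendantCode_inr_inr (hP_ne x y hxy) i j)
    rcases Sym2.eq_iff.mp hab with ⟨rfl, rfl⟩ | ⟨rfl, rfl⟩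
    · rw [key, hfP x y hxy]
    · rw [hammingDist_comm, key, hfP x y hxy]
  · obtain ⟨x, y, hxy, hdist⟩ := hlayer n k _ (hg'.comp (embeddingAddPendants T _))
    replace hdist : hammingDist (g' (.inl x)).1 (g' (.inl y)).1 = t + 2 := hdist
    obtain ⟨i, j, hij⟩ := exists_hammingDist_pendants_eq_add_two hg'.layer_val
      (x := x) (y := y) (by simp only [comp_apply, hdist, Fintype.card_fin, le_refl])
    exact ⟨_, _, ⟨x, y, i, j, hxy, rfl⟩, hij.trans (congrArg (· + 2) hdist)⟩
end

section
/- Let P6 be the path with vertices v0, v1, ..., v6 and edges v_i v_{i+1} for 0 ≤ i ≤ 5, and let P be the set of pairs {{v0, v4}, {v1, v5}, {v2, v6}}. Then (P6, P) is 2-distance-separating. -/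
open SimpleGraph

/-- The set of pairs `{v0,v4}, {v1,v5}, {v2,v6}` of the path `P6`. -/
def P6pairs : Set (Sym2 (Fin 7)) := {s((0 : Fin 7), (4 : Fin 7)), s(1, 5), s(2, 6)}

/-! In a hypercube embedding of the path `v₀ v₁ ⋯ v₆`, each step `v_{i+1}` is `v_i` with one
coordinate `c_i` flipped. Injectivity forces `c_i ≠ c_{i+1}`; inside a layer the steps go
alternately up and down, which forces `c_i ≠ c_{i+2}` as well. So `d(v_i, v_{i+4}) = 4` unless
`c_{i+3} = c_i`, and if that happens for `i = 0, 1, 2` then the flips of the last three steps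
undo those of the first three, giving `v₆ = v₀`. In `Q₃` the path
`000, 100, 110, 010, 011, 111, 101` has all three pairs at distance `2`. -/

section FlipAt

variable {ι : Type*} [DecidableEq ι]

def flipAt (a : ι → Bool) (c : ι) : ι → Bool := Function.update a c (!a c)

@[simp]
theorem flipAt_apply_self (a : ι → Bool) (c : ι) : flipAt a c c = !a c := by
  simp [flipAt]

@[simp]
theorem flipAt_apply_of_ne (a : ι → Bool) {c j : ι} (h : j ≠ c) : flipAt a c j = a j := by
  simp [flipAt, h]

@[simp]
theorem flipAt_flipAt (a : ι → Bool) (c : ι) : flipAt (flipAt a c) c = a := by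
  funext j
  by_cases hj : j = c <;> simp [hj]

theorem foldl_flipAt_apply (l : List ι) (a : ι → Bool) (j : ι) :
    l.foldl flipAt a j = (a j ^^ decide (Odd (l.count j))) := by
  induction l generalizing a with
  | nil => simp
  | cons c l ih =>
    rw [List.foldl_cons, ih, List.count_cons]
    by_cases hj : j = c
    · subst hj
      by_cases h : Odd (l.count j) <;> simp [h, Nat.odd_add_one]
    · simp [hj, Ne.symm hj]

theorem foldl_flipAt_append_self (l : List ι) (a : ι → Bool) : (l ++ l).foldl flipAt a = a := by
  funext j
  have : ¬Odd (l.count j + l.count j) := Nat.not_odd_iff_even.mpr ⟨_, rfl⟩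
  simp [foldl_flipAt_apply, List.count_append, this]

variable [Fintype ι]

theorem exists_eq_flipAt_of_hammingDist_eq_one {a b : ι → Bool} (h : hammingDist a b = 1) :
    ∃ c, b = flipAt a c := by
  obtain ⟨c, hc⟩ := Finset.card_eq_one.mp h
  have hdiff : ∀ j, a j ≠ b j ↔ j = c := fun j => by
    simpa using congrArg (j ∈ ·) hc
  refine ⟨c, funext fun j => ?_⟩
  by_cases hj : j = c
  · subst hj
    have := (hdiff j).mpr rfl
    cases h : a j <;> simp_all
  · simpa [hj, eq_comm] using (not_congr (hdiff j)).mpr hj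

theorem hammingDist_foldl_flipAt_of_nodup {l : List ι} (hl : l.Nodup) (a : ι → Bool) :
    hammingDist a (l.foldl flipAt a) = l.length := by
  rw [← List.toFinset_card_of_nodup hl, hammingDist]
  congr 1
  ext j
  by_cases hj : j ∈ l
  · simp [foldl_flipAt_apply, List.count_eq_one_of_mem hl hj, hj]
  · simp [foldl_flipAt_apply, List.count_eq_zero.mpr hj, hj]

end FlipAt

theorem onesCount_flipAt {n : ℕ} (a : Fin n → Bool) (c : Fin n) :
    onesCount (flipAt a c) + (a c).toNat = onesCount a + (!a c).toNat := by
  have split : ∀ x : Fin n → Bool,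
      onesCount x = (x c).toNat + ∑ i ∈ Finset.univ.erase c, (x i).toNat := fun x => by
    rw [Finset.add_sum_erase _ (fun i => (x i).toNat) (Finset.mem_univ c), onesCount,
      Finset.card_filter]
    exact Finset.sum_congr rfl fun i _ => by cases x i <;> rfl
  rw [split, split a, Finset.sum_congr rfl fun i hi =>
    congrArg Bool.toNat (flipAt_apply_of_ne a (Finset.ne_of_mem_erase hi)), flipAt_apply_self]
  ring

/-- Two consecutive steps inside a layer go in opposite directions (up when the flipped
coordinate was `false`). -/
theorem flipAt_apply_eq_not_of_mem_layerSet {n k : ℕ} {a : Fin n → Bool} {c c' : Fin n}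
    (ha : a ∈ layerSet n k) (hb : flipAt a c ∈ layerSet n k)
    (hd : flipAt (flipAt a c) c' ∈ layerSet n k) :
    flipAt a c c' = !a c := by
  have h₁ := onesCount_flipAt a c
  have h₂ := onesCount_flipAt (flipAt a c) c'
  simp only [layerSet, Set.mem_ofPred_eq] at ha hb hd
  revert h₁ h₂
  cases a c <;> cases flipAt a c c' <;> simp <;> omega

section Walk

variable {ι : Type*} [DecidableEq ι] {m : ℕ} {v : ℕ → ι → Bool} {c : ℕ → ι}

theorem exists_walk_flipAt [Fintype ι] (hm : 0 < m)
    (h : ∀ i < m, hammingDist (v i) (v (i + 1)) = 1) :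
    ∃ c : ℕ → ι, ∀ i < m, v (i + 1) = flipAt (v i) (c i) := by
  obtain ⟨c₀, -⟩ := exists_eq_flipAt_of_hammingDist_eq_one (h 0 hm)
  have : ∀ i, ∃ c, i < m → v (i + 1) = flipAt (v i) c := fun i =>
    if hi : i < m then (exists_eq_flipAt_of_hammingDist_eq_one (h i hi)).imp fun _ hc _ => hc
    else ⟨c₀, fun h' => absurd h' hi⟩
  choose c hc using this
  exact ⟨c, hc⟩

theorem walk_eq_foldl_flipAt (hv : ∀ i < m, v (i + 1) = flipAt (v i) (c i)) {i l : ℕ}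
    (h : i + l ≤ m) : v (i + l) = ((List.range l).map fun t => c (i + t)).foldl flipAt (v i) := by
  induction l with
  | zero => simp
  | succ l ih =>
    rw [← add_assoc, hv _ (by omega), ih (by omega), List.range_succ, List.map_append,
      List.foldl_append]
    rfl

theorem walk_flipAt_ne_succ (hv : ∀ i < m, v (i + 1) = flipAt (v i) (c i))
    (hinj : Set.InjOn v (Set.Iic m)) {i : ℕ} (h : i + 2 ≤ m) : c i ≠ c (i + 1) := by
  intro hc
  have hret : v (i + 2) = v i := by rw [hv _ (by omega), hv _ (by omega), ← hc, flipAt_flipAt]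
  have := hinj (by simp only [Set.mem_Iic]; omega) (by simp only [Set.mem_Iic]; omega) hret
  omega

end Walk

section LayerWalk

variable {n k m : ℕ} {v : ℕ → Fin n → Bool} {c : ℕ → Fin n}

theorem walk_flipAt_ne_add_two (hv : ∀ i < m, v (i + 1) = flipAt (v i) (c i))
    (hinj : Set.InjOn v (Set.Iic m)) (hL : ∀ i ≤ m, v i ∈ layerSet n k) {i : ℕ}
    (h : i + 3 ≤ m) : c i ≠ c (i + 2) := by
  have alternate : ∀ j, j + 2 ≤ m → v (j + 1) (c (j + 1)) = !v j (c j) := fun j hj => by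
    have h₀ := hL j (by omega)
    have h₁ := hL (j + 1) (by omega)
    have h₂ := hL (j + 2) (by omega)
    rw [hv (j + 1) (by omega)] at h₂
    rw [hv j (by omega)] at h₁ h₂ ⊢
    exact flipAt_apply_eq_not_of_mem_layerSet h₀ h₁ h₂
  intro hc
  have same := alternate (i + 1) (by omega)
  rw [alternate i (by omega), Bool.not_not, ← hc, hv (i + 1) (by omega),
    flipAt_apply_of_ne _ (walk_flipAt_ne_succ hv hinj (by omega)), hv i (by omega),
    flipAt_apply_self] at same
  simp at same

theorem hammingDist_walk_add_four (hv : ∀ i < m, v (i + 1) = flipAt (v i) (c i))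
    (hinj : Set.InjOn v (Set.Iic m)) (hL : ∀ i ≤ m, v i ∈ layerSet n k) {i : ℕ}
    (h : i + 4 ≤ m) (hc : c i ≠ c (i + 3)) : hammingDist (v i) (v (i + 4)) = 4 := by
  rw [walk_eq_foldl_flipAt hv h, hammingDist_foldl_flipAt_of_nodup]
  · simp
  · have ne_succ (j : ℕ) (hj : j ≤ i + 2) := walk_flipAt_ne_succ hv hinj (i := j) (by omega)
    have ne_add_two (j : ℕ) (hj : j ≤ i + 1) :=
      walk_flipAt_ne_add_two hv hinj hL (i := j) (by omega)
    simp [List.range_succ, ne_succ, ne_add_two, hc]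

theorem exists_hammingDist_walk_eq_four (hv : ∀ i < 6, v (i + 1) = flipAt (v i) (c i))
    (hinj : Set.InjOn v (Set.Iic 6)) (hL : ∀ i ≤ 6, v i ∈ layerSet n k) :
    ∃ i < 3, hammingDist (v i) (v (i + 4)) = 4 := by
  by_contra! hnear
  have hc : ∀ i < 3, c (i + 3) = c i := fun i hi => by
    by_contra hne
    exact hnear i hi (hammingDist_walk_add_four hv hinj hL (by omega) (Ne.symm hne))
  have hret : v 6 = v 0 := by
    rw [walk_eq_foldl_flipAt hv (i := 0) (l := 6) le_rfl]
    simp only [List.range_succ, List.range_zero, List.map_cons, List.map_nil, List.nil_append,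
      List.cons_append]
    rw [hc 0 (by norm_num), hc 1 (by norm_num), hc 2 (by norm_num)]
    exact foldl_flipAt_append_self [c 0, c 1, c 2] (v 0)
  have := hinj (by simp) (by simp) hret
  omega

end LayerWalk

def p6CubeEmbedding : Fin 7 → Fin 3 → Bool :=
  ![![false, false, false], ![true, false, false], ![true, true, false], ![false, true, false],
    ![false, true, true], ![true, true, true], ![true, false, true]]

theorem isEmbedding_p6CubeEmbedding :
    IsEmbedding (SimpleGraph.pathGraph 7) (cube 3) p6CubeEmbedding := by
  refine ⟨by decide, ?_⟩
  simp only [pathGraph_adj, cube]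
  decide

theorem hammingDist_p6CubeEmbedding_of_mem_P6pairs (x y : Fin 7) (h : s(x, y) ∈ P6pairs) :
    hammingDist (p6CubeEmbedding x) (p6CubeEmbedding y) = 2 := by
  simp only [P6pairs, Set.mem_insert_iff, Set.mem_singleton_iff, Sym2.eq_iff] at h
  revert x y
  decide

/-- `(P6, P)` is `2`-distance-separating. -/
theorem p6_distSeparating : DistSeparating (SimpleGraph.pathGraph 7) P6pairs 2 := by
  refine ⟨⟨3, p6CubeEmbedding, isEmbedding_p6CubeEmbedding,
    hammingDist_p6CubeEmbedding_of_mem_P6pairs⟩, ?_⟩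
  rintro n k g ⟨hinj, hadj⟩
  set v : ℕ → Fin n → Bool := fun i => (g (Fin.ofNat 7 i)).1
  have hstep : ∀ i < 6, hammingDist (v i) (v (i + 1)) = 1 := fun i hi => hadj _ _ <| by
    rw [pathGraph_adj, Fin.val_ofNat, Fin.val_ofNat, Nat.mod_eq_of_lt (by omega),
      Nat.mod_eq_of_lt (by omega)]
    exact Or.inl rfl
  have hvinj : Set.InjOn v (Set.Iic 6) := fun i hi j hj hij => by
    have := congrArg Fin.val (hinj (Subtype.ext hij))
    rwa [Fin.val_ofNat, Fin.val_ofNat, Nat.mod_eq_of_lt (Nat.lt_succ_of_le hi),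
      Nat.mod_eq_of_lt (Nat.lt_succ_of_le hj)] at this
  obtain ⟨c, hc⟩ := exists_walk_flipAt (by norm_num) hstep
  obtain ⟨i, hi, hfar⟩ := exists_hammingDist_walk_eq_four hc hvinj fun _ _ => (g _).2
  interval_cases i
  · exact ⟨0, 4, by simp [P6pairs], hfar⟩
  · exact ⟨1, 5, by simp [P6pairs], hfar⟩
  · exact ⟨2, 6, by simp [P6pairs], hfar⟩
end

section
/- Let T be the tree on 9 vertices consisting of the path v0, v1, ..., v7 together with one further vertex v8 adjacent to v2, and let P = {{v0,v4}, {v0,v6}, {v3,v7}, {v5,v8}}. Then (T, P) is 2-distance-separating. Moreover there exists an embedding f of T into Q_4 such that: (i) d(f(x), f(y)) = 2 for all pairs {x,y} ∈ P; (ii) for every pair {x,y} ∈ P, each direction occurs on at most two edges of the path in f(T) from f(x) to f(y); and (iii) f(T) is an induced subgraph of Q_4. -/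
/-!
Let the edge `v_{j-1} v_j` (and `v2 v8`) of an embedding of `T` into a layer switch the
coordinate `a_j` (and `a_8`). The edges of a path in a layer go alternately up
and down, so a coordinate switched up is not switched up again before it is switched down;
with injectivity this forces a path of length four whose ends are not at distance `4` to have
`a_1 = a_4`. If no pair of `P` were at distance `4`, the paths `v0 ⋯ v4`, `v3 ⋯ v7` and
`v5 v4 v3 v2 v8` give `a_1 = a_4 = a_7` and `a_5 = a_8`, the pair `{v0, v6}` then forces
`a_3 = a_6`, and finally `v7` and `v8` both differ from `v2` exactly in the coordinate `a_5`.
-/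

open SimpleGraph

/-- The tree on 9 vertices: the path `v0 v1 ... v7` together with `v8` adjacent to `v2`. -/
def treeT : SimpleGraph (Fin 9) :=
  SimpleGraph.fromEdgeSet
    {s((0 : Fin 9), (1 : Fin 9)), s(1, 2), s(2, 3), s(3, 4), s(4, 5), s(5, 6), s(6, 7), s(2, 8)}

/-- The set of pairs `{v0,v4}, {v0,v6}, {v3,v7}, {v5,v8}`. -/
def Tpairs : Set (Sym2 (Fin 9)) :=
  {s((0 : Fin 9), (4 : Fin 9)), s(0, 6), s(3, 7), s(5, 8)}

/-- `edgeUsesDir f i e` holds when the images under `f` of the endpoints of `e` differ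
in coordinate `i`, i.e. the edge `f(e)` uses direction `i`. -/
def edgeUsesDir {V : Type*} {n : ℕ} (f : V → (Fin n → Bool)) (i : Fin n) : Sym2 V → Bool :=
  Sym2.lift ⟨fun u v => decide (f u i ≠ f v i), by intro u v; simp [ne_comm]⟩

open Finset
open scoped symmDiff

section Hypercube

variable {ι : Type*} {x y z : ι → Bool} {i j : ι} {b c : Bool}

section DiffSet

variable [Fintype ι]

def diffSet (x y : ι → Bool) : Finset ι := {i | x i ≠ y i}

theorem hammingDist_eq_card_diffSet (x y : ι → Bool) : hammingDist x y = #(diffSet x y) := rfl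

@[simp]
theorem mem_diffSet : i ∈ diffSet x y ↔ x i ≠ y i := by simp [diffSet]

theorem diffSet_comm (x y : ι → Bool) : diffSet x y = diffSet y x := by
  simp [diffSet, ne_comm]

theorem diffSet_eq_empty_iff : diffSet x y = ∅ ↔ x = y := by
  simp [diffSet, filter_eq_empty_iff, funext_iff]

theorem ne_of_apply_eq_of_mem_diffSet (hx : x i = b) (hz : z j = b) (h : i ∈ diffSet x z) :
    i ≠ j := by
  rintro rfl
  exact mem_diffSet.1 h (hx.trans hz.symm)

variable [DecidableEq ι]

theorem diffSet_symmDiff_diffSet (x y z : ι → Bool) : diffSet x y ∆ diffSet y z = diffSet x z := by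
  ext i
  simp only [mem_symmDiff, mem_diffSet]
  cases x i <;> cases y i <;> cases z i <;> simp

theorem diffSet_injective (x : ι → Bool) : Function.Injective (diffSet x) := by
  intro y z h
  rw [← diffSet_eq_empty_iff, ← diffSet_symmDiff_diffSet y x z, diffSet_comm y x, h,
    symmDiff_self, bot_eq_empty]

end DiffSet

theorem card_symmDiff_singletons [DecidableEq ι] {a₁ a₂ a₃ a₄ : ι} (h₁₂ : a₁ ≠ a₂)
    (h₁₃ : a₁ ≠ a₃) (h₁₄ : a₁ ≠ a₄) (h₂₃ : a₂ ≠ a₃) (h₂₄ : a₂ ≠ a₄) (h₃₄ : a₃ ≠ a₄) :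
    #({a₁} ∆ {a₂} ∆ {a₃} ∆ {a₄} : Finset ι) = 4 := by
  rw [card_eq_four]
  refine ⟨a₁, a₂, a₃, a₄, h₁₂, h₁₃, h₁₄, h₂₃, h₂₄, h₃₄, ?_⟩
  ext i
  simp only [mem_symmDiff, mem_singleton, mem_insert]
  grind

variable [DecidableEq ι]

/-- `y` arises from `x` by switching the coordinate `i` from `b` to `!b`. -/
def IsStep (b : Bool) (x : ι → Bool) (i : ι) (y : ι → Bool) : Prop :=
  x i = b ∧ y = Function.update x i (!b)

namespace IsStep

theorem symm (h : IsStep b x i y) : IsStep (!b) y i x := by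
  obtain ⟨hx, rfl⟩ := h
  refine ⟨by simp, ?_⟩
  rw [Function.update_idem, Bool.not_not, ← hx, Function.update_eq_self]

theorem right_unique (h : IsStep b x i y) (h' : IsStep c x i z) : y = z := by
  rw [h.2, h'.2, ← h.1, ← h'.1]

variable [Fintype ι]

theorem diffSet_eq (h : IsStep b x i y) : diffSet x y = {i} := by
  obtain ⟨hx, rfl⟩ := h
  ext j
  by_cases hj : j = i
  · subst hj; simp [hx]
  · simp [hj]

theorem diffSet_right (h : IsStep b y i z) (x : ι → Bool) : diffSet x z = diffSet x y ∆ {i} := by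
  rw [← diffSet_symmDiff_diffSet x y z, h.diffSet_eq]

theorem ne_of_ne (h : IsStep b x i y) (h' : IsStep c y j z) (hxz : x ≠ z) : i ≠ j := by
  rintro rfl
  apply hxz
  rw [← diffSet_eq_empty_iff, h'.diffSet_right, h.diffSet_eq, symmDiff_self, bot_eq_empty]

end IsStep

variable [Fintype ι]

theorem exists_isStep_of_hammingDist_eq_one (h : hammingDist x y = 1) :
    ∃ i, IsStep (x i) x i y := by
  obtain ⟨i, hi⟩ := card_eq_one.1 h
  refine ⟨i, rfl, funext fun j => ?_⟩
  have hj : x j ≠ y j ↔ j = i := by simpa using congrArg (j ∈ ·) hi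
  by_cases hji : j = i
  · subst hji
    simpa [eq_comm, Bool.eq_not] using hj.2 rfl
  · simpa [hji, eq_comm] using hj.not.2 hji

theorem hammingDist_eq_four_of_zigzag {x₀ x₁ x₂ x₃ x₄ : ι → Bool} {a₁ a₂ a₃ a₄ : ι}
    (s₁ : IsStep b x₀ a₁ x₁) (s₂ : IsStep (!b) x₁ a₂ x₂) (s₃ : IsStep b x₂ a₃ x₃)
    (s₄ : IsStep (!b) x₃ a₄ x₄) (h₀₂ : x₀ ≠ x₂) (h₁₃ : x₁ ≠ x₃) (h₂₄ : x₂ ≠ x₄) (h₁₄ : a₁ ≠ a₄) :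
    hammingDist x₀ x₄ = 4 := by
  have h₁₂ := s₁.ne_of_ne s₂ h₀₂
  have h₂₃ := s₂.ne_of_ne s₃ h₁₃
  have h₃₄ := s₃.ne_of_ne s₄ h₂₄
  have h₁₃ : a₁ ≠ a₃ := ne_of_apply_eq_of_mem_diffSet s₁.1 s₃.1 <| by
    simp [s₂.diffSet_right, s₁.diffSet_eq, mem_symmDiff, h₁₂]
  have h₂₄ : a₂ ≠ a₄ := ne_of_apply_eq_of_mem_diffSet s₂.1 s₄.1 <| by
    simp [s₃.diffSet_right, s₂.diffSet_eq, mem_symmDiff, h₂₃]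
  rw [hammingDist_eq_card_diffSet, s₄.diffSet_right, s₃.diffSet_right, s₂.diffSet_right,
    s₁.diffSet_eq]
  exact card_symmDiff_singletons h₁₂ h₁₃ h₁₄ h₂₃ h₂₄ h₃₄

end Hypercube

section Layer

variable {n k : ℕ} {x y : Fin n → Bool} {i : Fin n} {b : Bool}

theorem IsStep.onesCount_add_toNat (h : IsStep b x i y) :
    onesCount y + b.toNat = onesCount x + (!b).toNat := by
  wlog hb : b = false generalizing b x y
  · have := this h.symm (by simpa using hb)
    simp only [Bool.not_not] at this
    omega
  subst hb
  obtain ⟨hx, rfl⟩ := h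
  have hones : univ.filter (fun j => Function.update x i true j = true) =
      insert i (univ.filter fun j => x j = true) := by
    ext j
    by_cases hj : j = i <;> simp [hj, Function.update_apply]
  simp [onesCount, hones, card_insert_of_notMem, hx]

theorem exists_isStep_of_mem_layerSet (hx : onesCount x = k + b.toNat) (hy : y ∈ layerSet n k)
    (hxy : hammingDist x y = 1) : ∃ i, IsStep b x i y ∧ onesCount y = k + (!b).toNat := by
  obtain ⟨i, hi⟩ := exists_isStep_of_hammingDist_eq_one hxy
  have hcount := hi.onesCount_add_toNat
  obtain rfl : x i = b := by
    rcases hy with hy | hy <;> cases hb : x i <;> cases b <;> simp [hb] at hx hcount ⊢ <;> omega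
  exact ⟨i, hi, by cases hb : x i <;> simp [hb] at hx hcount ⊢ <;> omega⟩

end Layer

theorem exists_mem_Tpairs_hammingDist_eq_four_of_isStep {ι : Type*} [Fintype ι] [DecidableEq ι]
    {x : Fin 9 → ι → Bool} (hx : Function.Injective x) {a₁ a₂ a₃ a₄ a₅ a₆ a₇ a₈ : ι} {b : Bool}
    (s₁ : IsStep b (x 0) a₁ (x 1)) (s₂ : IsStep (!b) (x 1) a₂ (x 2))
    (s₃ : IsStep b (x 2) a₃ (x 3)) (s₄ : IsStep (!b) (x 3) a₄ (x 4))
    (s₅ : IsStep b (x 4) a₅ (x 5)) (s₆ : IsStep (!b) (x 5) a₆ (x 6))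
    (s₇ : IsStep b (x 6) a₇ (x 7)) (s₈ : IsStep b (x 2) a₈ (x 8)) :
    ∃ u v, s(u, v) ∈ Tpairs ∧ hammingDist (x u) (x v) = 4 := by
  by_contra! hd
  have ne (u v : Fin 9) (h : u ≠ v := by decide) : x u ≠ x v := hx.ne h
  have h₁₄ : a₁ = a₄ := by_contra fun h => hd 0 4 (by simp [Tpairs]) <|
    hammingDist_eq_four_of_zigzag s₁ s₂ s₃ s₄ (ne 0 2) (ne 1 3) (ne 2 4) h
  have h₄₇ : a₄ = a₇ := by_contra fun h => hd 3 7 (by simp [Tpairs]) <|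
    hammingDist_eq_four_of_zigzag s₄ (by simpa using s₅) s₆ (by simpa using s₇)
      (ne 3 5) (ne 4 6) (ne 5 7) h
  have h₅₈ : a₅ = a₈ := by_contra fun h => hd 5 8 (by simp [Tpairs]) <|
    hammingDist_eq_four_of_zigzag s₅.symm (by simpa using s₄.symm) s₃.symm (by simpa using s₈)
      (ne 5 3) (ne 4 2) (ne 3 8) h
  have h₁₂ : a₁ ≠ a₂ := s₁.ne_of_ne s₂ (ne 0 2)
  have h₂₃ : a₂ ≠ a₃ := s₂.ne_of_ne s₃ (ne 1 3)
  have h₃₄ : a₃ ≠ a₄ := s₃.ne_of_ne s₄ (ne 2 4)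
  have h₅₆ : a₅ ≠ a₆ := s₅.ne_of_ne s₆ (ne 4 6)
  have h₂₅ : a₂ ≠ a₅ := fun h =>
    absurd (s₂.symm.right_unique (h ▸ h₅₈ ▸ s₈)) (ne 1 8)
  have h₃₅ : a₃ ≠ a₅ := ne_of_apply_eq_of_mem_diffSet s₃.1 s₅.1 <| by
    simp [s₄.diffSet_right, s₃.diffSet_eq, mem_symmDiff, h₃₄]
  have h₂₆ : a₂ ≠ a₆ := ne_of_apply_eq_of_mem_diffSet s₂.1 s₆.1 <| by
    simp [s₅.diffSet_right, s₄.diffSet_right, s₃.diffSet_right, s₂.diffSet_eq, mem_symmDiff,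
      h₂₃, h₂₅, ← h₁₄, h₁₂.symm]
  have h₃₆ : a₃ = a₆ := by_contra fun h => hd 0 6 (by simp [Tpairs]) <| by
    rw [hammingDist_eq_card_diffSet, s₆.diffSet_right, s₅.diffSet_right, s₄.diffSet_right,
      s₃.diffSet_right, s₂.diffSet_right, s₁.diffSet_eq, ← h₁₄,
      show ({a₁} ∆ {a₂} ∆ {a₃} ∆ {a₁} : Finset ι) = {a₂} ∆ {a₃} by
        ext; simp only [mem_symmDiff]; tauto]
    exact card_symmDiff_singletons h₂₃ h₂₅ h₂₆ h₃₅ h h₅₆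
  refine absurd (diffSet_injective (x 2) ?_) (ne 7 8)
  rw [s₇.diffSet_right, s₆.diffSet_right, s₅.diffSet_right, s₄.diffSet_right, s₃.diffSet_eq,
    s₈.diffSet_eq, ← h₄₇, ← h₃₆, ← h₅₈]
  ext
  simp only [mem_symmDiff]
  tauto

theorem exists_mem_Tpairs_hammingDist_eq_four {n k : ℕ} {g : Fin 9 → layerSet n k}
    (hg : IsEmbedding treeT (layer n k) g) :
    ∃ u v, s(u, v) ∈ Tpairs ∧ hammingDist (g u).1 (g v).1 = 4 := by
  have step (u v : Fin 9) {b : Bool} (hu : onesCount (g u).1 = k + b.toNat)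
      (huv : treeT.Adj u v := by simp [treeT]) :=
    exists_isStep_of_mem_layerSet hu (g v).2 (hg.2 u v huv)
  obtain ⟨b, hb⟩ : ∃ b : Bool, onesCount (g 0).1 = k + b.toNat := by
    rcases (g 0).2 with h | h
    exacts [⟨false, h⟩, ⟨true, h⟩]
  obtain ⟨a₁, s₁, l₁⟩ := step 0 1 hb
  obtain ⟨a₂, s₂, l₂⟩ := step 1 2 l₁
  rw [Bool.not_not] at l₂
  obtain ⟨a₃, s₃, l₃⟩ := step 2 3 l₂
  obtain ⟨a₄, s₄, l₄⟩ := step 3 4 l₃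
  rw [Bool.not_not] at l₄
  obtain ⟨a₅, s₅, l₅⟩ := step 4 5 l₄
  obtain ⟨a₆, s₆, l₆⟩ := step 5 6 l₅
  rw [Bool.not_not] at l₆
  obtain ⟨a₇, s₇, -⟩ := step 6 7 l₆
  obtain ⟨a₈, s₈, -⟩ := step 2 8 l₂
  exact exists_mem_Tpairs_hammingDist_eq_four_of_isStep (x := fun j => (g j).1)
    (Subtype.val_injective.comp hg.1) s₁ s₂ s₃ s₄ s₅ s₆ s₇ s₈

namespace SimpleGraph.Walk

variable {V : Type*} [DecidableEq V] {G : SimpleGraph V} {u v : V} {p : G.Walk u v}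

theorem IsTrail.countP_edges_le (hp : p.IsTrail) {s : Finset (Sym2 V)}
    (hs : ∀ e ∈ p.edges, e ∈ s) (q : Sym2 V → Bool) : p.edges.countP q ≤ #(s.filter (q ·)) := by
  rw [List.countP_eq_length_filter, ← List.toFinset_card_of_nodup (hp.edges_nodup.filter q)]
  exact card_le_card fun e he => by
    simp only [List.mem_toFinset, List.mem_filter] at he
    exact mem_filter.2 ⟨hs e he.1, he.2⟩

/-- A trail meets a vertex other than its endpoints in an even number of edges, so it cannot
pass through a leaf. -/
theorem IsTrail.mk_notMem_edges_of_leaf (hp : p.IsTrail) {w x : V} (hwu : w ≠ u) (hwv : w ≠ v)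
    (hx : ∀ y, G.Adj w y → y = x) : s(w, x) ∉ p.edges := by
  intro he
  have heven := (hp.even_countP_edges_iff w).2 fun _ => ⟨hwu, hwv⟩
  have hcount : p.edges.countP (fun e => w ∈ e) = p.edges.count s(w, x) := by
    rw [List.count_eq_countP]
    refine List.countP_congr fun e he' => ?_
    induction e using Sym2.ind with
    | _ a c =>
      have hac := p.adj_of_mem_edges he'
      simp only [decide_eq_true_eq, beq_iff_eq, Sym2.mem_iff]
      constructor
      · rintro (rfl | rfl)
        · rw [hx c hac]
        · rw [hx a hac.symm, Sym2.eq_swap]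
      · intro h
        rw [← Sym2.mem_iff, h]
        exact Sym2.mem_mk_left w x
  rw [hcount, List.count_eq_one_of_mem hp.edges_nodup he] at heven
  exact Nat.not_even_one heven

end SimpleGraph.Walk

def treeEdges : Finset (Sym2 (Fin 9)) :=
  {s(0, 1), s(1, 2), s(2, 3), s(3, 4), s(4, 5), s(5, 6), s(6, 7), s(2, 8)}

theorem treeT_adj_iff {u v : Fin 9} : treeT.Adj u v ↔ s(u, v) ∈ treeEdges := by
  revert u v
  simp only [treeT, fromEdgeSet_adj, Set.mem_insert_iff, Set.mem_singleton_iff, treeEdges,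
    mem_insert, mem_singleton]
  decide

theorem mem_treeEdges_of_mem_edgeSet {e : Sym2 (Fin 9)} (he : e ∈ treeT.edgeSet) :
    e ∈ treeEdges := by
  induction e using Sym2.ind
  exact treeT_adj_iff.1 he

def treeEmbedding : Fin 9 → Fin 4 → Bool :=
  ![![false, false, false, false], ![true, false, false, false], ![true, true, false, false],
    ![true, true, true, false], ![false, true, true, false], ![false, true, true, true],
    ![false, false, true, true], ![true, false, true, true], ![true, true, false, true]]

theorem treeT_adj_iff_cube_adj (u v : Fin 9) :
    treeT.Adj u v ↔ (cube 4).Adj (treeEmbedding u) (treeEmbedding v) := by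
  rw [treeT_adj_iff]
  revert u v
  simp only [cube]
  decide

theorem isEmbedding_treeEmbedding : IsEmbedding treeT (cube 4) treeEmbedding :=
  ⟨by decide, fun u v => (treeT_adj_iff_cube_adj u v).1⟩

theorem hammingDist_treeEmbedding_of_mem_Tpairs :
    ∀ u v : Fin 9, s(u, v) ∈ Tpairs → hammingDist (treeEmbedding u) (treeEmbedding v) = 2 := by
  simp only [Tpairs, Set.mem_insert_iff, Set.mem_singleton_iff]
  decide

theorem countP_edgeUsesDir_treeEmbedding_le_two {u v : Fin 9} (huv : s(u, v) ∈ Tpairs)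
    {w : treeT.Walk u v} (hw : w.IsPath) (i : Fin 4) :
    w.edges.countP (edgeUsesDir treeEmbedding i) ≤ 2 := by
  -- Only direction 0 is used on three edges; each pair avoids one of the leaves 0 and 7.
  have avoid : ∀ u v : Fin 9, s(u, v) ∈ Tpairs →
      ∃ l m : Fin 9, (l = 0 ∧ m = 1 ∨ l = 7 ∧ m = 6) ∧ l ≠ u ∧ l ≠ v := by
    simp only [Tpairs, Set.mem_insert_iff, Set.mem_singleton_iff]
    decide
  obtain ⟨l, m, hlm, hlu, hlv⟩ := avoid u v huv
  have hleaf : ∀ y, treeT.Adj l y → y = m := by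
    rcases hlm with ⟨rfl, rfl⟩ | ⟨rfl, rfl⟩ <;> simp only [treeT_adj_iff] <;> decide
  calc w.edges.countP (edgeUsesDir treeEmbedding i)
      ≤ #((treeEdges.erase s(l, m)).filter (edgeUsesDir treeEmbedding i ·)) :=
        hw.isTrail.countP_edges_le (fun e he => mem_erase.2
          ⟨ne_of_mem_of_not_mem he (hw.isTrail.mk_notMem_edges_of_leaf hlu hlv hleaf),
            mem_treeEdges_of_mem_edgeSet (w.edges_subset_edgeSet he)⟩) _
    _ ≤ 2 := by rcases hlm with ⟨rfl, rfl⟩ | ⟨rfl, rfl⟩ <;> revert i <;> decide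

/-- `(T, P)` is `2`-distance-separating; moreover there is an embedding
`f` of `T` into `Q_4` realising distance `2` on all pairs of `P`, using each direction on
at most two edges of the path between any pair of `P`, with `f(T)` induced in `Q_4`. -/
theorem treeT_distSeparating_induced :
    DistSeparating treeT Tpairs 2 ∧
    ∃ f : Fin 9 → (Fin 4 → Bool), IsEmbedding treeT (cube 4) f ∧
      (∀ x y : Fin 9, s(x, y) ∈ Tpairs → hammingDist (f x) (f y) = 2) ∧
      (∀ x y : Fin 9, s(x, y) ∈ Tpairs → ∀ w : treeT.Walk x y, w.IsPath →
        ∀ i : Fin 4, w.edges.countP (edgeUsesDir f i) ≤ 2) ∧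
      (∀ u v : Fin 9, treeT.Adj u v ↔ (cube 4).Adj (f u) (f v)) :=
  ⟨⟨⟨4, treeEmbedding, isEmbedding_treeEmbedding, hammingDist_treeEmbedding_of_mem_Tpairs⟩,
      fun _ _ _ hg => exists_mem_Tpairs_hammingDist_eq_four hg⟩,
    treeEmbedding, isEmbedding_treeEmbedding, hammingDist_treeEmbedding_of_mem_Tpairs,
    fun _ _ huv _ hw => countP_edgeUsesDir_treeEmbedding_le_two huv hw, treeT_adj_iff_cube_adj⟩
end

section
/- Let T be the tree on 9 vertices consisting of the path v0, v1, ..., v7 together with one further vertex v8 adjacent to v2, and let P = {{v0,v4}, {v0,v6}, {v3,v7}, {v5,v8}}. Let χ : E(T) → ℕ be any layered edge-labelling of T. Then there is some pair {x,y} ∈ P such that among the labels of the edges of the path in T from x to y, at least four labels each occur exactly once. -/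
open SimpleGraph

/-!
Adjacent edges receive distinct labels, since two equal labels on a path of length two both occur
an even number of times; by layeredness, so do edges with exactly one edge between them. Hence on
each of the paths `v0 … v4`, `v3 … v7`, `v8 … v5` the four labels are distinct unless the two end
edges share their label. If they do in all three cases, then `χ(v2v3) ≠ χ(v5v6)`, for otherwise
the labels along `v8 v2 v3 … v7` would read `xyzxyz`. Then the labels along `v1 … v6` are
distinct (layeredness across the three middle edges separates the end edges), and on `v0 … v6`
the first label reappears only as the fourth, leaving four labels that occur once. Since `T` is a
tree, these are the only paths between their end vertices.
-/

instance : DecidableRel treeT.Adj := fun _ _ => by unfold treeT; infer_instance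

theorem treeT_isTree : treeT.IsTree := by
  refine isTree_iff_connected_and_card.2 ⟨?_, ?_⟩
  · exact (connected_iff_exists_forall_reachable _).2 ⟨0, by decide⟩
  · simp only [Nat.card_eq_fintype_card, ← edgeFinset_card]
    decide

namespace SimpleGraph

variable {V : Type*} {G : SimpleGraph V}

theorem Walk.isPath_ofSupport {l : List V} (hne : l ≠ []) (hchain : l.IsChain G.Adj)
    (hl : l.Nodup) : (Walk.ofSupport l hne hchain).IsPath := by
  rwa [Walk.isPath_def, Walk.support_ofSupport]

end SimpleGraph

section Labelling

variable {V : Type*} {G : SimpleGraph V} {χ : Sym2 V → ℕ}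

theorem IsCubicalLabelling.labels_ne_append_self (hχ : IsCubicalLabelling G χ) {u v : V}
    {p : G.Walk u v} (hp : p.IsPath) (hpos : 0 < p.length) (l : List ℕ) :
    p.edges.map χ ≠ l ++ l := by
  intro h
  obtain ⟨c, hc⟩ := hχ.2 u v p hp hpos
  rw [h, List.count_append, ← two_mul] at hc
  exact Nat.not_odd_iff_even.2 (even_two_mul _) hc

theorem IsCubicalLabelling.label_ne_of_adj_adj (hχ : IsCubicalLabelling G χ) {u v w : V}
    (huv : G.Adj u v) (hvw : G.Adj v w) (huw : u ≠ w) : χ s(u, v) ≠ χ s(v, w) := fun h =>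
  hχ.labels_ne_append_self (p := .cons huv (.cons hvw .nil))
    (by simp [huv.ne, hvw.ne, huw]) (by simp) [χ s(u, v)] (by simp [h])

theorem IsLayeredLabelling.label_ne_of_isPath (hχ : IsLayeredLabelling G χ) {e₁ e₂ : Sym2 V}
    (he₁ : e₁ ∈ G.edgeSet) (he₂ : e₂ ∈ G.edgeSet) {u v : V} (hu : u ∈ e₁) (hv : v ∈ e₂)
    {p : G.Walk u v} (hp : p.IsPath) (hodd : Odd p.length) (hlab : χ e₁ ∉ p.edges.map χ) :
    χ e₁ ≠ χ e₂ := fun h =>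
  Nat.not_even_iff_odd.2 hodd <| hχ.2 e₁ he₁ e₂ he₂ h u v hu hv p hp
    fun _ he hχe => hlab (hχe ▸ List.mem_map_of_mem he)

theorem IsLayeredLabelling.label_ne_of_adj_adj_adj (hχ : IsLayeredLabelling G χ) {u v w x : V}
    (huv : G.Adj u v) (hvw : G.Adj v w) (hwx : G.Adj w x) (huw : u ≠ w) :
    χ s(u, v) ≠ χ s(w, x) :=
  hχ.label_ne_of_isPath huv hwx (Sym2.mem_mk_right u v) (Sym2.mem_mk_left w x)
    (.of_adj hvw) (by simp) (by simpa using hχ.1.label_ne_of_adj_adj huv hvw huw)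

theorem IsLayeredLabelling.nodup_labels_of_path4 (hχ : IsLayeredLabelling G χ)
    {u₀ u₁ u₂ u₃ u₄ : V} (h₁ : G.Adj u₀ u₁) (h₂ : G.Adj u₁ u₂) (h₃ : G.Adj u₂ u₃)
    (h₄ : G.Adj u₃ u₄) (hp : [u₀, u₁, u₂, u₃, u₄].Nodup) (hends : χ s(u₀, u₁) ≠ χ s(u₃, u₄)) :
    [χ s(u₀, u₁), χ s(u₁, u₂), χ s(u₂, u₃), χ s(u₃, u₄)].Nodup := by
  simp only [List.nodup_cons, List.mem_cons, List.not_mem_nil, List.nodup_nil, or_false, not_or,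
    not_false_eq_true, and_true] at hp ⊢
  obtain ⟨⟨-, h₀₂, -⟩, ⟨-, h₁₃, -⟩, ⟨-, h₂₄⟩, -⟩ := hp
  exact ⟨⟨hχ.1.label_ne_of_adj_adj h₁ h₂ h₀₂, hχ.label_ne_of_adj_adj_adj h₁ h₂ h₃ h₀₂, hends⟩,
    ⟨hχ.1.label_ne_of_adj_adj h₂ h₃ h₁₃, hχ.label_ne_of_adj_adj_adj h₂ h₃ h₄ h₁₃⟩,
    hχ.1.label_ne_of_adj_adj h₃ h₄ h₂₄⟩

theorem IsLayeredLabelling.nodup_labels_of_path5 (hχ : IsLayeredLabelling G χ)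
    {u₀ u₁ u₂ u₃ u₄ u₅ : V} (h₁ : G.Adj u₀ u₁) (h₂ : G.Adj u₁ u₂) (h₃ : G.Adj u₂ u₃)
    (h₄ : G.Adj u₃ u₄) (h₅ : G.Adj u₄ u₅) (hp : [u₀, u₁, u₂, u₃, u₄, u₅].Nodup)
    (h₀₃ : χ s(u₀, u₁) ≠ χ s(u₃, u₄)) (h₁₄ : χ s(u₁, u₂) ≠ χ s(u₄, u₅)) :
    [χ s(u₀, u₁), χ s(u₁, u₂), χ s(u₂, u₃), χ s(u₃, u₄), χ s(u₄, u₅)].Nodup := by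
  have hinit := hχ.nodup_labels_of_path4 h₁ h₂ h₃ h₄ (hp.sublist (by simp)) h₀₃
  have htail := hχ.nodup_labels_of_path4 h₂ h₃ h₄ h₅ (hp.sublist (by simp)) h₁₄
  have hends : χ s(u₀, u₁) ≠ χ s(u₄, u₅) :=
    hχ.label_ne_of_isPath h₁ h₅ (Sym2.mem_mk_right u₀ u₁) (Sym2.mem_mk_left u₄ u₅)
      (p := .cons h₂ (.cons h₃ (.cons h₄ .nil))) ((Walk.isPath_def _).2 (hp.sublist (by simp)))
      ⟨1, rfl⟩ (List.nodup_cons.1 hinit).1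
  exact List.nodup_cons.2 ⟨by simpa [hends] using (List.nodup_cons.1 hinit).1, htail⟩

end Labelling

def HasFourUnique (l : List ℕ) : Prop :=
  ∃ a b c d : ℕ, a ≠ b ∧ a ≠ c ∧ a ≠ d ∧ b ≠ c ∧ b ≠ d ∧ c ≠ d ∧
    l.count a = 1 ∧ l.count b = 1 ∧ l.count c = 1 ∧ l.count d = 1

theorem hasFourUnique_of_nodup {a b c d : ℕ} (h : [a, b, c, d].Nodup) :
    HasFourUnique [a, b, c, d] := by
  simp only [List.nodup_cons, List.mem_cons, List.not_mem_nil, List.nodup_nil, or_false, not_or,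
    not_false_eq_true, and_true] at h
  obtain ⟨⟨hab, hac, had⟩, ⟨hbc, hbd⟩, hcd⟩ := h
  refine ⟨a, b, c, d, hab, hac, had, hbc, hbd, hcd, ?_, ?_, ?_, ?_⟩ <;>
    simp [*, Ne.symm hab, Ne.symm hac, Ne.symm had, Ne.symm hbc, Ne.symm hbd, Ne.symm hcd]

theorem hasFourUnique_cons_of_nodup {a b c d e : ℕ} (h : [a, b, c, d, e].Nodup) :
    HasFourUnique (c :: [a, b, c, d, e]) := by
  simp only [List.nodup_cons, List.mem_cons, List.not_mem_nil, List.nodup_nil, or_false, not_or,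
    not_false_eq_true, and_true] at h
  obtain ⟨⟨hab, hac, had, hae⟩, ⟨hbc, hbd, hbe⟩, ⟨hcd, hce⟩, hde⟩ := h
  refine ⟨a, b, d, e, hab, had, hae, hbd, hbe, hde, ?_, ?_, ?_, ?_⟩ <;>
    simp [*, Ne.symm hac, Ne.symm hbc]

theorem exists_tpair_of_ofSupport {χ : Sym2 (Fin 9) → ℕ} (l : List (Fin 9)) (hne : l ≠ [])
    (hchain : l.IsChain treeT.Adj) (hl : l.Nodup) (hpair : s(l.head hne, l.getLast hne) ∈ Tpairs)
    (h : HasFourUnique ((Walk.ofSupport l hne hchain).edges.map χ)) :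
    ∃ x y : Fin 9, s(x, y) ∈ Tpairs ∧
      ∀ w : treeT.Walk x y, w.IsPath → HasFourUnique (w.edges.map χ) := by
  refine ⟨_, _, hpair, fun w hw => ?_⟩
  obtain rfl : w = .ofSupport l hne hchain := congrArg Subtype.val <|
    (treeT_isTree.isAcyclic.subsingleton_path _ _).elim ⟨w, hw⟩
      ⟨_, Walk.isPath_ofSupport hne hchain hl⟩
  exact h

theorem exists_tpair_of_labels_eq {χ : Sym2 (Fin 9) → ℕ} (hχ : IsLayeredLabelling treeT χ)
    (h₁₄ : χ s(0, 1) = χ s(3, 4)) (h₄₇ : χ s(3, 4) = χ s(6, 7)) (h₈₅ : χ s(8, 2) = χ s(4, 5)) :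
    ∃ x y : Fin 9, s(x, y) ∈ Tpairs ∧
      ∀ w : treeT.Walk x y, w.IsPath → HasFourUnique (w.edges.map χ) := by
  have h₃₆ : χ s(2, 3) ≠ χ s(5, 6) := fun h₃₆ =>
    hχ.1.labels_ne_append_self (p := .ofSupport [8, 2, 3, 4, 5, 6, 7] (by simp) (by decide))
      (Walk.isPath_ofSupport _ _ (by decide)) (by decide) [χ s(4, 5), χ s(2, 3), χ s(3, 4)]
      (by
        show [χ s(8, 2), χ s(2, 3), χ s(3, 4), χ s(4, 5), χ s(5, 6), χ s(6, 7)] = _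
        rw [h₈₅, ← h₃₆, ← h₄₇]; rfl)
  have h₂₅ : χ s(1, 2) ≠ χ s(4, 5) := by
    rw [← h₈₅, Sym2.eq_swap (a := 8)]
    exact hχ.1.label_ne_of_adj_adj (by decide : treeT.Adj 1 2) (by decide) (by decide)
  refine exists_tpair_of_ofSupport [0, 1, 2, 3, 4, 5, 6] (by simp) (by decide) (by decide)
    (by simp [Tpairs]) ?_
  show HasFourUnique [χ s(0, 1), _, _, _, _, _]
  rw [h₁₄]
  exact hasFourUnique_cons_of_nodup <| hχ.nodup_labels_of_path5 (by decide : treeT.Adj 1 2)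
    (by decide) (by decide) (by decide) (by decide) (by decide) h₂₅ h₃₆

/-- For any layered edge-labelling of `T`, some pair of `P` is joined
by a path on which at least four labels occur exactly once. -/
theorem treeT_layered_labelling_four_unique (χ : Sym2 (Fin 9) → ℕ)
    (hχ : IsLayeredLabelling treeT χ) :
    ∃ x y : Fin 9, s(x, y) ∈ Tpairs ∧
      ∀ w : treeT.Walk x y, w.IsPath →
        ∃ a b c d : ℕ, a ≠ b ∧ a ≠ c ∧ a ≠ d ∧ b ≠ c ∧ b ≠ d ∧ c ≠ d ∧
          (w.edges.map χ).count a = 1 ∧ (w.edges.map χ).count b = 1 ∧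
          (w.edges.map χ).count c = 1 ∧ (w.edges.map χ).count d = 1 := by
  obtain h₁₄ | h₁₄ := ne_or_eq (χ s(0, 1)) (χ s(3, 4))
  · refine exists_tpair_of_ofSupport [0, 1, 2, 3, 4] (by simp) (by decide) (by decide)
      (by simp [Tpairs]) ?_
    exact hasFourUnique_of_nodup <| hχ.nodup_labels_of_path4 (by decide : treeT.Adj 0 1)
      (by decide) (by decide) (by decide) (by decide) h₁₄
  obtain h₄₇ | h₄₇ := ne_or_eq (χ s(3, 4)) (χ s(6, 7))
  · refine exists_tpair_of_ofSupport [3, 4, 5, 6, 7] (by simp) (by decide) (by decide)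
      (by simp [Tpairs]) ?_
    exact hasFourUnique_of_nodup <| hχ.nodup_labels_of_path4 (by decide : treeT.Adj 3 4)
      (by decide) (by decide) (by decide) (by decide) h₄₇
  obtain h₈₅ | h₈₅ := ne_or_eq (χ s(8, 2)) (χ s(4, 5))
  · refine exists_tpair_of_ofSupport [8, 2, 3, 4, 5] (by simp) (by decide) (by decide)
      (by simp [Tpairs]) ?_
    exact hasFourUnique_of_nodup <| hχ.nodup_labels_of_path4 (by decide : treeT.Adj 8 2)
      (by decide) (by decide) (by decide) (by decide) h₈₅
  exact exists_tpair_of_labels_eq hχ h₁₄ h₄₇ h₈₅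
end

section
/- Let G be a finite connected simple graph that is cubical but not layered. Then G has positive Turán edge-density in the hypercube: there exists a constant c > 0 such that for every n, the hypercube Q_n contains a subgraph H with no subgraph isomorphic to G and with at least c times as many edges as Q_n. -/
open SimpleGraph

/-!
Split the edges of `Q_n` by the parity of the lower endpoint's number of ones. One of the two
classes carries at least half of the edges. In either class, two edges sharing a vertex lie in
the same layer, since a vertex with `m` ones touches the layers `m - 1` and `m`, of different
parities. Hence every connected subgraph of such a class lies in a single layer, and a connected
graph that is not layered cannot embed in it.
-/

open Finset

lemma onesCount_eq_succ_or_of_cube_adj {n : ℕ} {x y : Fin n → Bool} (h : (cube n).Adj x y) :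
    onesCount y = onesCount x + 1 ∨ onesCount x = onesCount y + 1 := by
  set A : Finset (Fin n) := {i | x i = true}
  set B : Finset (Fin n) := {i | y i = true}
  have hdist : hammingDist x y = #(A \ B) + #(B \ A) := by
    rw [hammingDist, ← card_union_of_disjoint disjoint_sdiff_sdiff]
    congr 1
    ext i
    simp only [A, B, mem_union, mem_sdiff, mem_filter, mem_univ, true_and]
    cases x i <;> cases y i <;> decide
  have hA := card_sdiff_add_card_inter A B
  have hB := card_sdiff_add_card_inter B A
  rw [inter_comm] at hB
  have h1 : hammingDist x y = 1 := h
  change #B = #A + 1 ∨ #A = #B + 1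
  omega

lemma mem_layerSet_min_of_cube_adj {n : ℕ} {x y : Fin n → Bool} (h : (cube n).Adj x y) :
    x ∈ layerSet n (min (onesCount x) (onesCount y)) := by
  have := onesCount_eq_succ_or_of_cube_adj h
  simp only [layerSet, Set.mem_ofPred_eq]
  omega

def halfCube (n p : ℕ) : SimpleGraph (Fin n → Bool) where
  Adj x y := (cube n).Adj x y ∧ min (onesCount x) (onesCount y) % 2 = p
  symm := ⟨fun _ _ h => ⟨h.1.symm, by rw [min_comm]; exact h.2⟩⟩
  loopless := ⟨fun _ h => (cube n).loopless.irrefl _ h.1⟩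

lemma halfCube_le_cube (n p : ℕ) : halfCube n p ≤ cube n := fun _ _ h => h.1

lemma cube_le_halfCube_sup (n : ℕ) : cube n ≤ halfCube n 0 ⊔ halfCube n 1 := by
  intro x y h
  rcases Nat.mod_two_eq_zero_or_one (min (onesCount x) (onesCount y)) with hp | hp
  · exact Or.inl ⟨h, hp⟩
  · exact Or.inr ⟨h, hp⟩

lemma exists_ncard_edgeSet_cube_le_two_mul_halfCube (n : ℕ) :
    ∃ p, (cube n).edgeSet.ncard ≤ 2 * (halfCube n p).edgeSet.ncard := by
  have hsplit : (cube n).edgeSet.ncard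
      ≤ (halfCube n 0).edgeSet.ncard + (halfCube n 1).edgeSet.ncard :=
    calc (cube n).edgeSet.ncard
        ≤ (halfCube n 0 ⊔ halfCube n 1).edgeSet.ncard :=
          Set.ncard_le_ncard (edgeSet_mono (cube_le_halfCube_sup n)) (Set.toFinite _)
      _ ≤ _ := by rw [edgeSet_sup]; exact Set.ncard_union_le _ _
  rcases le_total (halfCube n 0).edgeSet.ncard (halfCube n 1).edgeSet.ncard with h | h
  · exact ⟨1, by omega⟩
  · exact ⟨0, by omega⟩

lemma mem_layerSet_of_halfCube_adj {n p m : ℕ} {x y : Fin n → Bool}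
    (h : (halfCube n p).Adj x y) (hm : m % 2 = p) (hx : x ∈ layerSet n m) :
    y ∈ layerSet n m := by
  obtain ⟨hadj, hp⟩ := h
  have := onesCount_eq_succ_or_of_cube_adj hadj
  simp only [layerSet, Set.mem_ofPred_eq] at hx ⊢
  omega

lemma mem_layerSet_of_halfCube_reachable {n p m : ℕ} {x y : Fin n → Bool}
    (h : (halfCube n p).Reachable x y) (hm : m % 2 = p) (hx : x ∈ layerSet n m) :
    y ∈ layerSet n m := by
  obtain ⟨w⟩ := h
  induction w with
  | nil => exact hx
  | cons hadj _ ih => exact ih (mem_layerSet_of_halfCube_adj hadj hm hx)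

lemma isLayered_of_mem_layerSet {V : Type*} {G : SimpleGraph V} {n m : ℕ}
    {f : V → (Fin n → Bool)} (hf : IsEmbedding G (cube n) f) (hm : ∀ v, f v ∈ layerSet n m) :
    IsLayered G :=
  ⟨n, m, fun v => ⟨f v, hm v⟩, fun _ _ huv => hf.1 (congrArg Subtype.val huv),
    fun u v huv => hf.2 u v huv⟩

lemma isLayered_of_isEmbedding_halfCube {V : Type*} {G : SimpleGraph V} (hconn : G.Connected)
    {n p : ℕ} {f : V → (Fin n → Bool)} (hf : IsEmbedding G (halfCube n p) f) : IsLayered G := by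
  have hcube : IsEmbedding G (cube n) f :=
    ⟨hf.1, fun u v huv => halfCube_le_cube n p (hf.2 u v huv)⟩
  by_cases hedge : ∃ a b, G.Adj a b
  · obtain ⟨a, b, hab⟩ := hedge
    obtain ⟨hadj, hp⟩ := hf.2 a b hab
    let φ : G →g halfCube n p := ⟨f, hf.2 _ _⟩
    exact isLayered_of_mem_layerSet hcube fun v =>
      mem_layerSet_of_halfCube_reachable ((hconn a v).map φ) hp
        (mem_layerSet_min_of_cube_adj hadj)
  · push Not at hedge
    obtain ⟨a⟩ := hconn.nonempty
    have hsingle : ∀ v, v = a := fun v => by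
      obtain ⟨w⟩ := hconn v a
      cases w with
      | nil => rfl
      | cons h _ => exact absurd h (hedge _ _)
    refine isLayered_of_mem_layerSet (m := onesCount (f a)) hcube fun v => ?_
    rw [hsingle v]
    exact Or.inl rfl

theorem positive_turan_density_of_not_layered_general {V : Type}
    (G : SimpleGraph V) (hconn : G.Connected)
    (hlay : ¬ IsLayered G) :
    ∃ c : ℝ, 0 < c ∧ ∀ n : ℕ, ∃ H : SimpleGraph (Fin n → Bool), H ≤ cube n ∧
      (¬ ∃ f : V → (Fin n → Bool), IsEmbedding G H f) ∧
      c * ((cube n).edgeSet.ncard : ℝ) ≤ (H.edgeSet.ncard : ℝ) := by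
  refine ⟨1 / 2, by norm_num, fun n => ?_⟩
  obtain ⟨p, hp⟩ := exists_ncard_edgeSet_cube_le_two_mul_halfCube n
  refine ⟨halfCube n p, halfCube_le_cube n p,
    fun ⟨_, hf⟩ => hlay (isLayered_of_isEmbedding_halfCube hconn hf), ?_⟩
  have hhalf : ((cube n).edgeSet.ncard : ℝ) ≤ 2 * (halfCube n p).edgeSet.ncard := by
    exact_mod_cast hp
  linarith

/-- A finite connected graph that is cubical but not layered has
positive Turán edge-density in the hypercube. -/
theorem positive_turan_density_of_not_layered {V : Type} [Fintype V]
    (G : SimpleGraph V) (hconn : G.Connected) (hcub : IsCubical G)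
    (hlay : ¬ IsLayered G) :
    ∃ c : ℝ, 0 < c ∧ ∀ n : ℕ, ∃ H : SimpleGraph (Fin n → Bool), H ≤ cube n ∧
      (¬ ∃ f : V → (Fin n → Bool), IsEmbedding G H f) ∧
      c * ((cube n).edgeSet.ncard : ℝ) ≤ (H.edgeSet.ncard : ℝ) :=
  positive_turan_density_of_not_layered_general G hconn hlay
end
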